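/- arXiv:2602.18182 — 5 statements merged into one kernel-verified Lean document; each statement's English description precedes it below -/
import Mathlib

section
/- (Behaviour of the boundary probability as the interval width approaches zero.) For every fixed a > 0, with a'(r) = a + exp(1/r) − 1 and boundary probability P_bd(r) = 1 / (2·(σ(a'(r)·r)² + (1 − σ(a'(r)·r))²)), one has lim_{r → 0⁺} P_bd(r) = 1/2. -/
noncomputable def sigma (x : ℝ) : ℝ := 1 / (1 + Real.exp (-x))

lemma sigma_tendsto_one : Filter.Tendsto sigma Filter.atTop (nhds 1) := by
  have h : Filter.Tendsto (fun x : ℝ => Real.exp (-x)) Filter.atTop (nhds 0) :=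
    Real.tendsto_exp_neg_atTop_nhds_zero
  have h2 : Filter.Tendsto (fun x : ℝ => 1 / (1 + Real.exp (-x))) Filter.atTop (nhds 1) := by
    have := (h.const_add 1)
    have h3 : Filter.Tendsto (fun x : ℝ => 1 + Real.exp (-x)) Filter.atTop (nhds 1) := by
      simpa using this
    have := h3.inv₀ (by norm_num)
    simpa [one_div] using this
  exact h2

lemma arg_tendsto (a : ℝ) :
    Filter.Tendsto (fun r : ℝ => (a + Real.exp (1 / r) - 1) * r)
      (nhdsWithin 0 (Set.Ioi 0)) Filter.atTop := by
  have hinv : Filter.Tendsto (fun r : ℝ => r⁻¹) (nhdsWithin 0 (Set.Ioi 0)) Filter.atTop :=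
    tendsto_inv_nhdsGT_zero
  have hexp : Filter.Tendsto (fun u : ℝ => Real.exp u / u) Filter.atTop Filter.atTop := by
    simpa using Real.tendsto_exp_div_pow_atTop 1
  have h1 : Filter.Tendsto (fun r : ℝ => Real.exp r⁻¹ / r⁻¹)
      (nhdsWithin 0 (Set.Ioi 0)) Filter.atTop := hexp.comp hinv
  have h2 : Filter.Tendsto (fun r : ℝ => (a - 1) * r) (nhdsWithin 0 (Set.Ioi 0)) (nhds 0) := by
    have : Filter.Tendsto (fun r : ℝ => (a - 1) * r) (nhds 0) (nhds ((a - 1) * 0)) :=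
      (continuous_const.mul continuous_id).tendsto 0
    simpa using this.mono_left nhdsWithin_le_nhds
  have hsum := h2.add_atTop h1
  apply hsum.congr'
  filter_upwards [self_mem_nhdsWithin] with r (hr : 0 < r)
  have hr' : r ≠ 0 := ne_of_gt hr
  field_simp
  ring

theorem boundary_prob_limit_r_zero (a : ℝ) (ha : 0 < a) :
    Filter.Tendsto
      (fun r : ℝ =>
        1 / (2 * (sigma ((a + Real.exp (1 / r) - 1) * r) ^ 2 +
          (1 - sigma ((a + Real.exp (1 / r) - 1) * r)) ^ 2)))
      (nhdsWithin 0 (Set.Ioi 0)) (nhds (1 / 2)) := by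
  have hσ : Filter.Tendsto (fun r : ℝ => sigma ((a + Real.exp (1 / r) - 1) * r))
      (nhdsWithin 0 (Set.Ioi 0)) (nhds 1) :=
    sigma_tendsto_one.comp (arg_tendsto a)
  have hg : ContinuousAt (fun s : ℝ => 1 / (2 * (s ^ 2 + (1 - s) ^ 2))) 1 := by
    apply ContinuousAt.div continuousAt_const
    · fun_prop
    · norm_num
  have h := hg.tendsto.comp hσ
  norm_num [Function.comp] at h ⊢
  exact h
end

section
/- (Expansion of the boundary probability as r → 0⁺.) For every fixed a > 0, with a'(r) = a + exp(1/r) − 1 and boundary probability P_bd(r) = 1 / (2·(σ(a'(r)·r)² + (1 − σ(a'(r)·r))²)), there exist constants C > 0 and r₀ > 0 such that for all r with 0 < r < r₀, |P_bd(r) − 1/2 − exp(−a'(r)·r)| ≤ C · exp(−3·a'(r)·r). -/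
theorem boundary_prob_expansion_r_zero (a : ℝ) (ha : 0 < a) :
    ∃ C > (0 : ℝ), ∃ r₀ > (0 : ℝ), ∀ r : ℝ, 0 < r → r < r₀ →
      |1 / (2 * (sigma ((a + Real.exp (1 / r) - 1) * r) ^ 2 +
          (1 - sigma ((a + Real.exp (1 / r) - 1) * r)) ^ 2))
        - 1 / 2 - Real.exp (-((a + Real.exp (1 / r) - 1) * r))|
      ≤ C * Real.exp (-(3 * ((a + Real.exp (1 / r) - 1) * r))) := by
  refine ⟨1, one_pos, 1, one_pos, fun r hr _ => ?_⟩
  set t := (a + Real.exp (1 / r) - 1) * r with ht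
  set u := Real.exp (-t) with hudef
  have hu : 0 < u := Real.exp_pos _
  have h1 : (0:ℝ) < 1 + u := by positivity
  have h2 : (0:ℝ) < 1 + u ^ 2 := by positivity
  have hs : sigma t = 1 / (1 + u) := rfl
  have key : 1 / (2 * ((1 / (1 + u)) ^ 2 + (1 - 1 / (1 + u)) ^ 2)) - 1 / 2 - u
      = -(u ^ 3 / (1 + u ^ 2)) := by
    field_simp
    ring
  have hexp3 : Real.exp (-(3 * t)) = u ^ 3 := by
    rw [hudef, ← Real.exp_nat_mul]
    norm_num
  rw [hs, key, abs_neg, abs_of_nonneg (by positivity), hexp3, one_mul]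
  exact div_le_self (by positivity) (by nlinarith)
end

section
/- (Expansion of the boundary probability as r → +∞.) For every fixed a > 0, with a'(r) = a + exp(1/r) − 1 and boundary probability P_bd(r) = 1 / (2·(σ(a'(r)·r)² + (1 − σ(a'(r)·r))²)), there exist constants C > 0 and r₀ > 0 such that for all r ≥ r₀, |P_bd(r) − 1/2 − exp(−a·r − 1)·(1 − 1/(2r))| ≤ C · exp(−a·r) / r². -/
set_option maxHeartbeats 2000000

theorem boundary_prob_expansion_r_top (a : ℝ) (ha : 0 < a) :
    ∃ C > (0 : ℝ), ∃ r₀ > (0 : ℝ), ∀ r : ℝ, r₀ ≤ r →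
      |1 / (2 * (sigma ((a + Real.exp (1 / r) - 1) * r) ^ 2 +
          (1 - sigma ((a + Real.exp (1 / r) - 1) * r)) ^ 2))
        - 1 / 2 - Real.exp (-(a * r) - 1) * (1 - 1 / (2 * r))|
      ≤ C * Real.exp (-(a * r)) / r ^ 2 := by
  refine ⟨1 + 1 / a ^ 2, by positivity, 3, by norm_num, fun r hr => ?_⟩
  have hr0 : (0:ℝ) < r := by linarith
  have hrne : r ≠ 0 := hr0.ne'
  set t : ℝ := (a + Real.exp (1 / r) - 1) * r with ht
  set u : ℝ := Real.exp (-t) with hudef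
  have hu0 : 0 < u := Real.exp_pos _
  have hs : sigma t = 1 / (1 + u) := by simp only [sigma, hudef]
  have h1u : (0:ℝ) < 1 + u := by linarith
  have h1u2 : (0:ℝ) < 1 + u ^ 2 := by positivity
  have hd : sigma t ^ 2 + (1 - sigma t) ^ 2 = (1 + u ^ 2) / (1 + u) ^ 2 := by
    rw [hs]; field_simp; try ring
  have key : 1 / (2 * (sigma t ^ 2 + (1 - sigma t) ^ 2)) - 1 / 2 = u / (1 + u ^ 2) := by
    rw [hd]; field_simp; try ring
  rw [key]
  -- Taylor bound for exp(1/r)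
  have hx1 : |1 / r| ≤ 1 := by
    rw [abs_of_pos (by positivity)]
    rw [div_le_one hr0]; linarith
  have hexp3 := Real.exp_bound hx1 (n := 3) (by norm_num)
  have hsum3 : ∑ m ∈ Finset.range 3, (1/r) ^ m / m.factorial
      = 1 + 1/r + (1/r)^2 / 2 := by
    simp [Finset.sum_range_succ, Nat.factorial]
  rw [hsum3] at hexp3
  set d : ℝ := Real.exp (1/r) - (1 + 1/r + (1/r)^2/2) with hddef
  have hdb : |d| ≤ 2 / (9 * r ^ 3) := by
    refine hexp3.trans ?_
    rw [abs_of_pos (by positivity : (0:ℝ) < 1/r)]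
    have hc : ((Nat.succ 3 : ℕ) : ℝ) / ((Nat.factorial 3 : ℕ) * ((3:ℕ):ℝ)) ≤ 2/9 := by
      norm_num [Nat.factorial]
    have hp : (0:ℝ) < (1/r)^3 := by positivity
    have he : (1/r)^3 * (2/9) = 2 / (9 * r^3) := by field_simp
    nlinarith
  have hrd : |r * d| ≤ 2 / (9 * r ^ 2) := by
    rw [abs_mul, abs_of_pos hr0]
    have h1 : r * |d| ≤ r * (2 / (9 * r ^ 3)) := mul_le_mul_of_nonneg_left hdb hr0.le
    have h2 : r * (2 / (9 * r ^ 3)) = 2 / (9 * r ^ 2) := by field_simp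
    linarith
  set y : ℝ := 1 / (2 * r) + r * d with hydef
  have htd : t = a * r + 1 + y := by
    have hexp : Real.exp (1/r) = d + (1 + 1/r + (1/r)^2/2) := by rw [hddef]; ring
    rw [ht, hexp, hydef]; field_simp; ring
  have hr2pos : (0:ℝ) < r ^ 2 := by positivity
  have hrinv : 1 / (2 * r) ≤ 1 / 6 := by
    rw [div_le_div_iff₀ (by linarith) (by norm_num)]; linarith
  have hrd' : |r * d| ≤ 2 / 81 := by
    refine hrd.trans ?_
    rw [div_le_div_iff₀ (by positivity) (by norm_num)]
    nlinarith
  have habs1 : |1/(2*r)| = 1/(2*r) := abs_of_pos (by positivity)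
  have hy1 : |y| ≤ 1 := by
    have := abs_add_le (1/(2*r)) (r*d)
    rw [habs1] at this
    calc |y| ≤ 1/(2*r) + |r*d| := this
    _ ≤ 1/6 + 2/81 := add_le_add hrinv hrd'
    _ ≤ 1 := by norm_num
  -- bound on |exp(-y) - (1 - y)|
  have hexp2 : |Real.exp (-y) - (1 - y)| ≤ y ^ 2 := by
    have h := Real.abs_exp_sub_one_sub_id_le (x := -y) (by rwa [abs_neg])
    have h2 : Real.exp (-y) - 1 - (-y) = Real.exp (-y) - (1 - y) := by ring
    rw [h2, neg_pow] at h
    simpa using h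
  -- |y| ≤ (31/54)/r
  have hyb : |y| ≤ (31/54) / r := by
    have h0 := abs_add_le (1/(2*r)) (r*d)
    rw [habs1] at h0
    have h1 : 2/(9*r^2) ≤ 2/(27*r) := by
      apply div_le_div_of_nonneg_left (by norm_num) (by positivity)
      nlinarith
    have h2 : 1/(2*r) + 2/(27*r) = (31/54)/r := by field_simp; ring
    linarith
  have hy2 : y ^ 2 ≤ (961/2916) / r ^ 2 := by
    have h1 := sq_le_sq' (neg_le_of_abs_le hyb) (le_of_abs_le hyb)
    have h2 : ((31/54)/r) ^ 2 = (961/2916) / r ^ 2 := by field_simp; ring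
    linarith
  have hkey2 : |Real.exp (-y) - (1 - 1/(2*r))| ≤ 1 / r ^ 2 := by
    have h1 : Real.exp (-y) - (1 - 1/(2*r)) = (Real.exp (-y) - (1 - y)) + (-(r*d)) := by
      rw [hydef]; ring
    calc |Real.exp (-y) - (1 - 1/(2*r))|
        ≤ |Real.exp (-y) - (1 - y)| + |-(r*d)| := by rw [h1]; exact abs_add_le _ _
    _ ≤ (961/2916)/r^2 + 2/(9*r^2) := by
        rw [abs_neg]
        exact add_le_add (hexp2.trans hy2) hrd
    _ ≤ 1 / r ^ 2 := by
        have h4 : (961/2916) / r^2 + 2/(9*r^2) ≤ 1/r^2 := by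
          have e1 : (2:ℝ)/(9*r^2) = (2/9)/r^2 := by ring
          rw [e1, ← add_div, div_le_div_iff₀ (by positivity) hr2pos]
          nlinarith
        linarith
  -- u = exp(-(a r) - 1) * exp(-y)
  have hu : u = Real.exp (-(a*r) - 1) * Real.exp (-y) := by
    rw [hudef, ← Real.exp_add]
    congr 1
    rw [htd]; ring
  set E : ℝ := Real.exp (-(a*r)) with hEdef
  have hE0 : 0 < E := Real.exp_pos _
  have hstep1 : |u - Real.exp (-(a*r) - 1) * (1 - 1/(2*r))| ≤ E / r ^ 2 := by
    rw [hu, ← mul_sub, abs_mul, abs_of_pos (Real.exp_pos _)]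
    have h1 : Real.exp (-(a*r) - 1) ≤ E := by
      rw [hEdef]
      exact Real.exp_le_exp.2 (by linarith)
    calc Real.exp (-(a*r)-1) * |Real.exp (-y) - (1 - 1/(2*r))|
        ≤ E * (1 / r ^ 2) := mul_le_mul h1 hkey2 (abs_nonneg _) hE0.le
    _ = E / r ^ 2 := by ring
  -- u ≤ E
  have huE : u ≤ E := by
    rw [hudef, hEdef]
    apply Real.exp_le_exp.2
    have hy1' : -1 ≤ y := neg_le_of_abs_le hy1
    rw [htd]; linarith
  -- E * E ≤ 1/(a^2 r^2)
  have hquad : E * E ≤ 1 / (a^2 * r^2) := by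
    have h1 : a * r ≤ Real.exp (a * r) := by
      have := Real.add_one_le_exp (a*r); linarith
    have h2 : E = 1 / Real.exp (a*r) := by
      rw [hEdef, Real.exp_neg, inv_eq_one_div]
    rw [h2]
    have hep : (0:ℝ) < Real.exp (a*r) := Real.exp_pos _
    have har : 0 < a * r := by positivity
    rw [div_mul_div_comm, one_mul, div_le_div_iff₀ (by positivity) (by positivity)]
    nlinarith
  have hstep2 : |u / (1 + u^2) - u| ≤ E * (1 / (a^2 * r^2)) := by
    have h1 : u / (1 + u^2) - u = -(u^3 / (1 + u^2)) := by field_simp; ring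
    rw [h1, abs_neg, abs_of_pos (by positivity)]
    have h2 : u^3 / (1 + u^2) ≤ u^3 := by
      rw [div_le_iff₀ h1u2]
      have h5 : 0 ≤ u^3 * u^2 := by positivity
      nlinarith
    refine h2.trans ?_
    have h3 : u^3 ≤ E * (E * E) := by
      have := pow_le_pow_left₀ hu0.le huE 3
      calc u ^ 3 ≤ E ^ 3 := this
      _ = E * (E * E) := by ring
    have h4 : E * (E * E) ≤ E * (1 / (a^2 * r^2)) := mul_le_mul_of_nonneg_left hquad hE0.le
    linarith
  have hfin : |u / (1 + u^2) - Real.exp (-(a*r) - 1) * (1 - 1/(2*r))|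
      ≤ E / r^2 + E * (1 / (a^2 * r^2)) := by
    calc |u / (1 + u^2) - Real.exp (-(a*r) - 1) * (1 - 1/(2*r))|
        ≤ |u / (1 + u^2) - u| + |u - Real.exp (-(a*r) - 1) * (1 - 1/(2*r))| :=
          abs_sub_le _ _ _
    _ ≤ E * (1 / (a^2 * r^2)) + E / r^2 := add_le_add hstep2 hstep1
    _ = E / r^2 + E * (1 / (a^2 * r^2)) := by ring
  refine hfin.trans (le_of_eq ?_)
  have ha2 : a ^ 2 ≠ 0 := by positivity
  have hrne2 : (r:ℝ)^2 ≠ 0 := by positivity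
  field_simp
end

section
/- (Uniform bounds on the boundary probability for fixed discrimination a = 1.) With a = 1, a'(r) = exp(1/r), and boundary probability P_bd(r) = 1 / (2·(σ(r·exp(1/r))² + (1 − σ(r·exp(1/r)))²)), for all r > 0 one has 1/2 < P_bd(r) ≤ 1 / (2·(σ(e)² + (1 − σ(e))²)), where e = exp(1); the upper bound is attained at r = 1. -/
noncomputable def Pbd (r : ℝ) : ℝ :=
  1 / (2 * (sigma (r * Real.exp (1 / r)) ^ 2 +
    (1 - sigma (r * Real.exp (1 / r))) ^ 2))

lemma sigma_lt_one (t : ℝ) : sigma t < 1 := by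
  unfold sigma
  have h := Real.exp_pos (-t)
  rw [div_lt_one (by linarith)]
  linarith

lemma sigma_gt_half {t : ℝ} (ht : 0 < t) : 1 / 2 < sigma t := by
  unfold sigma
  have h1 : Real.exp (-t) < 1 := by
    rw [Real.exp_lt_one_iff]; linarith
  have h0 : (0:ℝ) < 1 + Real.exp (-t) := by positivity
  rw [div_lt_div_iff₀ (by norm_num) h0]
  linarith

lemma sigma_mono {a b : ℝ} (h : a ≤ b) : sigma a ≤ sigma b := by
  unfold sigma
  apply one_div_le_one_div_of_le (by positivity)
  have := Real.exp_le_exp.mpr (neg_le_neg h)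
  linarith

theorem boundary_prob_uniform_bounds :
    (∀ r : ℝ, 0 < r →
      1 / 2 < Pbd r ∧
      Pbd r ≤ 1 / (2 * (sigma (Real.exp 1) ^ 2 + (1 - sigma (Real.exp 1)) ^ 2))) ∧
    Pbd 1 = 1 / (2 * (sigma (Real.exp 1) ^ 2 + (1 - sigma (Real.exp 1)) ^ 2)) := by
  constructor
  · intro r hr
    have ht : Real.exp 1 ≤ r * Real.exp (1 / r) := by
      have h1 : Real.log (1 / r) ≤ 1 / r - 1 :=
        Real.log_le_sub_one_of_pos (by positivity)
      rw [one_div, Real.log_inv, ← one_div] at h1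
      calc Real.exp 1 ≤ Real.exp (Real.log r + 1 / r) :=
            Real.exp_le_exp.mpr (by linarith)
        _ = r * Real.exp (1 / r) := by rw [Real.exp_add, Real.exp_log hr]
    have he : (0:ℝ) < Real.exp 1 := Real.exp_pos 1
    set t := r * Real.exp (1 / r) with htdef
    have hse := sigma_gt_half he
    have hst := sigma_gt_half (lt_of_lt_of_le he ht)
    have hmono := sigma_mono ht
    set a := sigma (Real.exp 1)
    set b := sigma t
    have hb1 : b < 1 := sigma_lt_one t
    have hQt_lt : b ^ 2 + (1 - b) ^ 2 < 1 := by nlinarith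
    have hQ_pos : 0 < b ^ 2 + (1 - b) ^ 2 := by nlinarith
    have hQe_pos : 0 < a ^ 2 + (1 - a) ^ 2 := by nlinarith
    have hQ_le : a ^ 2 + (1 - a) ^ 2 ≤ b ^ 2 + (1 - b) ^ 2 := by nlinarith
    constructor
    · unfold Pbd
      rw [div_lt_div_iff₀ (by norm_num) (by positivity)]
      linarith
    · unfold Pbd
      apply one_div_le_one_div_of_le (by positivity)
      linarith
  · unfold Pbd
    norm_num
end

section
/- (Normalized model convergence, upper boundary removed.) Fix real numbers θ, b_l and a > 0. For b_u > b_l, set r = (b_u − b_l)/2, a' = a + exp(1/r) − 1, and define the normalized two-sided 2x2PL response P(θ; b_l, b_u, a) = σ(a'·r)^{−2} · σ(a'·(θ − b_l)) · σ(a'·(b_u − θ)). Then P(θ; b_l, b_u, a) converges to σ(a·(θ − b_l)) as b_u → +∞; i.e., the normalized propensity model reduces to the standard 2PL capability model with difficulty b_l and discrimination a when the upper boundary constraint is removed. -/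
/-! As `b_u → ∞` the half-width `r` tends to `∞`, so the adjusted discrimination `a'` tends to
`a > 0`. Hence `a' r` and `a' (b_u - θ)` tend to `∞`, the normalising factor `σ(a' r)⁻²` and the
upper factor `σ(a' (b_u - θ))` tend to `1`, and by continuity the lower factor tends to
`σ(a (θ - b_l))`. -/

open Filter Topology Real

lemma sigma_eq_sigmoid : sigma = sigmoid := funext fun _ => one_div _

lemma tendsto_add_exp_one_div_sub_one {α : Type*} {l : Filter α} {r : α → ℝ}
    (hr : Tendsto r l atTop) (a : ℝ) :
    Tendsto (fun x => a + exp (1 / r x) - 1) l (𝓝 a) := by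
  have hinv : Tendsto (fun x => 1 / r x) l (𝓝 0) := by
    simpa only [one_div, Pi.inv_def] using hr.inv_tendsto_atTop
  simpa using (hinv.rexp.const_add a).sub_const 1

lemma tendsto_sigmoid_mul_atTop {α : Type*} {l : Filter α} {c g : α → ℝ} {a : ℝ}
    (hc : Tendsto c l (𝓝 a)) (ha : 0 < a) (hg : Tendsto g l atTop) :
    Tendsto (fun x => sigmoid (c x * g x)) l (𝓝 1) :=
  tendsto_sigmoid_atTop.comp (hc.pos_mul_atTop ha hg)

theorem normalized_convergence_upper (θ b_l a : ℝ) (ha : 0 < a) :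
    Filter.Tendsto
      (fun b_u : ℝ =>
        let r := (b_u - b_l) / 2
        let a' := a + Real.exp (1 / r) - 1
        (sigma (a' * r) ^ 2)⁻¹ * sigma (a' * (θ - b_l)) * sigma (a' * (b_u - θ)))
      Filter.atTop (nhds (sigma (a * (θ - b_l)))) := by
  rw [sigma_eq_sigmoid]
  have hr : Tendsto (fun b_u : ℝ => (b_u - b_l) / 2) atTop atTop :=
    (tendsto_atTop_add_const_right _ _ tendsto_id).atTop_div_const two_pos
  have ha' := tendsto_add_exp_one_div_sub_one hr a
  have hnormalizer := ((tendsto_sigmoid_mul_atTop ha' ha hr).pow 2).inv₀ (by norm_num)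
  have hlower := (continuous_sigmoid.tendsto _).comp (ha'.mul_const (θ - b_l))
  have hupper := tendsto_sigmoid_mul_atTop ha' ha (tendsto_atTop_add_const_right _ (-θ) tendsto_id)
  simpa [Function.comp_def, sub_eq_add_neg] using (hnormalizer.mul hlower).mul hupper
end
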